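/- Fix reals θ > 0, η > 0, V > 0, ξ > 0, Q > 0 and E_b ≥ 0, define F(R) = V·ξ·max(η(e^{θR} − 1) − E_b, 0) − Q·R on [0, Q], R_th = (1/θ)·ln(E_b/η + 1) and R_s = (1/θ)·ln(Q/(θ·V·η·ξ)). Define R* as follows: if R_th ≥ Q then R* = Q; otherwise R* = R_s if R_th ≤ R_s ≤ Q, R* = R_th if R_s < R_th, and R* = Q if R_s > Q. Then R* ∈ [0, Q] and F(R*) ≤ F(R) for every R ∈ [0, Q]; that is, R* is a global minimizer of the per-period Lyapunov objective over the feasible rates [0, Q]. -/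

import Mathlib

/-!
Since `V ξ max(x, 0) - Q R = max (V ξ x - Q R) (-Q R)`, the objective is the maximum of the
line `-Q R` and the grid branch `G R = V ξ (η (e^{θR} - 1) - E_b) - Q R`; it equals the line for
`R ≤ R_th` and `G` for `R ≥ R_th`. The derivative `V ξ η θ e^{θR} - Q` of `G` is increasing and
vanishes at `R_s`, so `G` decreases up to `R_s` and increases after it. In each case of the rule,
`R*` attains one of the two lower bounds: `-Q R* ≤ -Q R` on the line piece, and `G R* ≤ G R` on
the branch piece by the monotonicity of `G`.
-/

open Real Set

section ExpMinusLinear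

variable {a b q s : ℝ}

theorem hasDerivAt_mul_exp_sub_mul (x : ℝ) :
    HasDerivAt (fun x => a * exp (b * x) - q * x) (a * b * exp (b * x) - q) x :=
  ((((hasDerivAt_id' x).const_mul b).exp.const_mul a).sub
    ((hasDerivAt_id' x).const_mul q)).congr_deriv (by ring)

theorem monotoneOn_mul_exp_sub_mul (ha : 0 ≤ a) (hb : 0 ≤ b) (hs : a * b * exp (b * s) = q) :
    MonotoneOn (fun x => a * exp (b * x) - q * x) (Ici s) := by
  refine monotoneOn_of_deriv_nonneg (convex_Ici s) (by fun_prop) (by fun_prop) fun x hx => ?_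
  rw [interior_Ici] at hx
  rw [(hasDerivAt_mul_exp_sub_mul x).deriv, ← hs, sub_nonneg]
  gcongr
  exact hx.le

theorem antitoneOn_mul_exp_sub_mul (ha : 0 ≤ a) (hb : 0 ≤ b) (hs : a * b * exp (b * s) = q) :
    AntitoneOn (fun x => a * exp (b * x) - q * x) (Iic s) := by
  refine antitoneOn_of_deriv_nonpos (convex_Iic s) (by fun_prop) (by fun_prop) fun x hx => ?_
  rw [interior_Iic] at hx
  rw [(hasDerivAt_mul_exp_sub_mul x).deriv, ← hs, sub_nonpos]
  gcongr
  exact hx.le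

end ExpMinusLinear

theorem exp_mul_one_div_mul_log {θ x : ℝ} (hθ : θ ≠ 0) (hx : 0 < x) :
    exp (θ * (1 / θ * log x)) = x := by
  rw [← mul_assoc, mul_one_div_cancel hθ, one_mul, exp_log hx]

section RateRule

variable {θ η V ξ Q Eb : ℝ}

noncomputable def lyapunovObjective (θ η V ξ Q Eb R : ℝ) : ℝ :=
  V * ξ * max (η * (exp (θ * R) - 1) - Eb) 0 - Q * R

noncomputable def gridBranch (θ η V ξ Q Eb R : ℝ) : ℝ :=
  V * ξ * (η * (exp (θ * R) - 1) - Eb) - Q * R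

theorem gridBranch_le_lyapunovObjective (hV : 0 ≤ V) (hξ : 0 ≤ ξ) (R : ℝ) :
    gridBranch θ η V ξ Q Eb R ≤ lyapunovObjective θ η V ξ Q Eb R := by
  unfold gridBranch lyapunovObjective
  gcongr
  exact le_max_left _ _

theorem neg_mul_le_lyapunovObjective (hV : 0 ≤ V) (hξ : 0 ≤ ξ) (hQ : 0 ≤ Q) {R t : ℝ}
    (hR : R ≤ t) : -(Q * t) ≤ lyapunovObjective θ η V ξ Q Eb R := by
  unfold lyapunovObjective
  have : 0 ≤ V * ξ * max (η * (exp (θ * R) - 1) - Eb) 0 := by positivity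
  nlinarith

theorem lyapunovObjective_eq_neg_mul (hθ : 0 ≤ θ) (hη : 0 ≤ η) {R t : ℝ}
    (ht : η * (exp (θ * t) - 1) = Eb) (hR : R ≤ t) :
    lyapunovObjective θ η V ξ Q Eb R = -(Q * R) := by
  have : η * (exp (θ * R) - 1) - Eb ≤ 0 := by
    rw [← ht, sub_nonpos]
    gcongr
  rw [lyapunovObjective, max_eq_right this]
  ring

theorem lyapunovObjective_eq_gridBranch (hθ : 0 ≤ θ) (hη : 0 ≤ η) {R t : ℝ}
    (ht : η * (exp (θ * t) - 1) = Eb) (hR : t ≤ R) :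
    lyapunovObjective θ η V ξ Q Eb R = gridBranch θ η V ξ Q Eb R := by
  have : 0 ≤ η * (exp (θ * R) - 1) - Eb := by
    rw [← ht, sub_nonneg]
    gcongr
  rw [lyapunovObjective, max_eq_left this, gridBranch]

theorem gridBranch_eq_add_const :
    gridBranch θ η V ξ Q Eb =
      fun R => (V * ξ * η * exp (θ * R) - Q * R) + -(V * ξ * (η + Eb)) := by
  funext R
  rw [gridBranch]
  ring

theorem mul_exp_batteryThreshold_sub_one (hθ : θ ≠ 0) (hη : 0 < η) (hEb : 0 ≤ Eb) :
    η * (exp (θ * (1 / θ * log (Eb / η + 1))) - 1) = Eb := by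
  rw [exp_mul_one_div_mul_log hθ (by positivity)]
  field_simp
  ring

theorem mul_exp_stationaryRate (hθ : 0 < θ) (hη : 0 < η) (hV : 0 < V) (hξ : 0 < ξ) (hQ : 0 < Q) :
    θ * V * η * ξ * exp (θ * (1 / θ * log (Q / (θ * V * η * ξ)))) = Q := by
  rw [exp_mul_one_div_mul_log hθ.ne' (by positivity)]
  field_simp

variable {s : ℝ}

theorem gridBranch_monotoneOn (hθ : 0 ≤ θ) (hη : 0 ≤ η) (hV : 0 ≤ V) (hξ : 0 ≤ ξ)
    (hs : θ * V * η * ξ * exp (θ * s) = Q) : MonotoneOn (gridBranch θ η V ξ Q Eb) (Ici s) := by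
  rw [gridBranch_eq_add_const]
  exact (monotoneOn_mul_exp_sub_mul (by positivity) hθ (by rw [← hs]; ring)).add_const _

theorem gridBranch_antitoneOn (hθ : 0 ≤ θ) (hη : 0 ≤ η) (hV : 0 ≤ V) (hξ : 0 ≤ ξ)
    (hs : θ * V * η * ξ * exp (θ * s) = Q) : AntitoneOn (gridBranch θ η V ξ Q Eb) (Iic s) := by
  rw [gridBranch_eq_add_const]
  exact (antitoneOn_mul_exp_sub_mul (by positivity) hθ (by rw [← hs]; ring)).add_const _

theorem gridBranch_le_of_stationary (hθ : 0 ≤ θ) (hη : 0 ≤ η) (hV : 0 ≤ V) (hξ : 0 ≤ ξ)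
    (hs : θ * V * η * ξ * exp (θ * s) = Q) (R : ℝ) :
    gridBranch θ η V ξ Q Eb s ≤ gridBranch θ η V ξ Q Eb R := by
  rcases le_total s R with h | h
  · exact gridBranch_monotoneOn hθ hη hV hξ hs self_mem_Ici h h
  · exact gridBranch_antitoneOn hθ hη hV hξ hs h self_mem_Iic h

end RateRule

/-- Equation (20) of the paper: the complete rate rule of the BGL algorithm
selects a global minimizer `R*` of the per-period Lyapunov objective over the
feasible rates `[0, Q]`. -/
theorem BGL_rate_rule_optimal (θ η V ξ Q Eb : ℝ)
    (hθ : 0 < θ) (hη : 0 < η) (hV : 0 < V) (hξ : 0 < ξ) (hQ : 0 < Q) (hEb : 0 ≤ Eb)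
    (F : ℝ → ℝ)
    (hF : F = fun R : ℝ => V * ξ * max (η * (Real.exp (θ * R) - 1) - Eb) 0 - Q * R)
    (Rth : ℝ) (hRth : Rth = (1 / θ) * Real.log (Eb / η + 1))
    (Rs : ℝ) (hRs : Rs = (1 / θ) * Real.log (Q / (θ * V * η * ξ)))
    (Rstar : ℝ)
    (hRstar : Rstar =
      if Q ≤ Rth then Q
      else if Rth ≤ Rs ∧ Rs ≤ Q then Rs
      else if Rs < Rth then Rth
      else Q) :
    Rstar ∈ Set.Icc (0 : ℝ) Q ∧ ∀ R ∈ Set.Icc (0 : ℝ) Q, F Rstar ≤ F R := by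
  obtain rfl : F = lyapunovObjective θ η V ξ Q Eb := hF
  have hth : η * (exp (θ * Rth) - 1) = Eb := hRth ▸ mul_exp_batteryThreshold_sub_one hθ.ne' hη hEb
  have hs : θ * V * η * ξ * exp (θ * Rs) = Q := hRs ▸ mul_exp_stationaryRate hθ hη hV hξ hQ
  have hRth0 : 0 ≤ Rth := by
    rw [hRth]
    have : 0 ≤ log (Eb / η + 1) := log_nonneg (by linarith [div_nonneg hEb hη.le])
    positivity
  subst hRstar
  split_ifs with h₁ h₂ h₃
  · refine ⟨⟨hQ.le, le_rfl⟩, fun R hR => ?_⟩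
    rw [lyapunovObjective_eq_neg_mul hθ.le hη.le hth h₁]
    exact neg_mul_le_lyapunovObjective hV.le hξ.le hQ.le hR.2
  · refine ⟨⟨hRth0.trans h₂.1, h₂.2⟩, fun R _ => ?_⟩
    rw [lyapunovObjective_eq_gridBranch hθ.le hη.le hth h₂.1]
    exact (gridBranch_le_of_stationary hθ.le hη.le hV.le hξ.le hs R).trans
      (gridBranch_le_lyapunovObjective hV.le hξ.le R)
  · refine ⟨⟨hRth0, (not_le.1 h₁).le⟩, fun R _ => ?_⟩
    rcases le_total R Rth with hR | hR
    · rw [lyapunovObjective_eq_neg_mul hθ.le hη.le hth le_rfl]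
      exact neg_mul_le_lyapunovObjective hV.le hξ.le hQ.le hR
    · rw [lyapunovObjective_eq_gridBranch hθ.le hη.le hth le_rfl]
      exact (gridBranch_monotoneOn hθ.le hη.le hV.le hξ.le hs h₃.le (h₃.le.trans hR) hR).trans
        (gridBranch_le_lyapunovObjective hV.le hξ.le R)
  · have hQRs : Q ≤ Rs := by
      by_contra! h
      exact h₂ ⟨not_lt.1 h₃, h.le⟩
    refine ⟨⟨hQ.le, le_rfl⟩, fun R hR => ?_⟩
    rw [lyapunovObjective_eq_gridBranch hθ.le hη.le hth (not_le.1 h₁).le]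
    exact (gridBranch_antitoneOn hθ.le hη.le hV.le hξ.le hs (hR.2.trans hQRs) hQRs hR.2).trans
      (gridBranch_le_lyapunovObjective hV.le hξ.le R)
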